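/- Let Φ, Ψ be linear flows on finite-dimensional real normed spaces X, Y. If Φ and Ψ are C¹-orbit equivalent (i.e., (h,τ)-related with h a C¹-diffeomorphism), then A^Φ and αA^Ψ are similar for some α > 0; conversely if A^Φ and αA^Ψ are similar for some α > 0 then Φ and Ψ are linearly flow equivalent via h(x) = Hx and τ(t,x) = αt. -/

import Mathlib

open Filter Topology

/-- The linear flow generated by a continuous linear operator `A`. -/
noncomputable def linFlow {X : Type*} [NormedAddCommGroup X] [NormedSpace ℝ X]
    (A : X →L[ℝ] X) (t : ℝ) (x : X) : X :=
  NormedSpace.exp (t • A) x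

set_option synthInstance.maxHeartbeats 1000000
set_option maxHeartbeats 1000000

open NormedSpace

section Helpers

variable {Y : Type*} [NormedAddCommGroup Y] [NormedSpace ℝ Y] [FiniteDimensional ℝ Y]

lemma exp_smul_add (B : Y →L[ℝ] Y) (s t : ℝ) :
    exp ((s + t) • B) = exp (s • B) * exp (t • B) := by
  rw [add_smul]
  letI : NormedAlgebra ℚ (Y →L[ℝ] Y) := NormedAlgebra.restrictScalars ℚ ℝ (Y →L[ℝ] Y)
  exact exp_add_of_commute (((Commute.refl B).smul_left s).smul_right t)

lemma hasDerivAt_flow (B : Y →L[ℝ] Y) (y : Y) (t : ℝ) :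
    HasDerivAt (fun s : ℝ => exp (s • B) y) (exp (t • B) (B y)) t := by
  have := (hasDerivAt_exp_smul_const B t).clm_apply (hasDerivAt_const t y)
  simpa using this

lemma hasStrictDerivAt_flow (B : Y →L[ℝ] Y) (y : Y) (t : ℝ) :
    HasStrictDerivAt (fun s : ℝ => exp (s • B) y) (exp (t • B) (B y)) t := by
  have := (hasStrictDerivAt_exp_smul_const B t).clm_apply (hasStrictDerivAt_const t y)
  simpa using this

lemma continuous_flow (B : Y →L[ℝ] Y) (y : Y) :
    Continuous (fun s : ℝ => exp (s • B) y) :=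
  continuous_iff_continuousAt.2 fun t => (hasDerivAt_flow B y t).continuousAt

/-- The additive subgroup of times fixing `y`. -/
def fixSub (B : Y →L[ℝ] Y) (y : Y) : AddSubgroup ℝ where
  carrier := {s | exp (s • B) y = y}
  zero_mem' := by simp [exp_zero]
  add_mem' := by
    intro a b ha hb
    show exp ((a + b) • B) y = y
    rw [exp_smul_add, ContinuousLinearMap.mul_apply]
    rw [Set.mem_setOf_eq] at ha hb
    rw [hb, ha]
  neg_mem' := by
    intro a ha
    rw [Set.mem_setOf_eq] at ha ⊢
    have h2 := congrArg (⇑(exp ((-a) • B))) ha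
    rw [← ContinuousLinearMap.mul_apply, ← exp_smul_add, neg_add_cancel, zero_smul,
      exp_zero, ContinuousLinearMap.one_apply] at h2
    exact h2.symm

lemma isClosed_fixSub (B : Y →L[ℝ] Y) (y : Y) : IsClosed (fixSub B y : Set ℝ) :=
  isClosed_eq (continuous_flow B y) continuous_const

/-- If `B y = 0` then `y` is fixed by the flow. -/
lemma fixed_of_deriv_zero (B : Y →L[ℝ] Y) (y : Y) (hy : B y = 0) (s : ℝ) :
    exp (s • B) y = y := by
  have hdiff : Differentiable ℝ (fun s : ℝ => exp (s • B) y) :=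
    fun t => (hasDerivAt_flow B y t).differentiableAt
  have hconst : ∀ t : ℝ, deriv (fun s : ℝ => exp (s • B) y) t = 0 := by
    intro t
    rw [(hasDerivAt_flow B y t).deriv, hy, map_zero]
  have := is_const_of_deriv_eq_zero hdiff hconst s 0
  simpa [exp_zero] using this

/-- If `y` is fixed at an uncountable set of times then `B y = 0`. -/
lemma deriv_zero_of_fixed (B : Y →L[ℝ] Y) (y : Y) (τ : ℝ → ℝ) (hτ : StrictMono τ)
    (hfix : ∀ t, exp (τ t • B) y = y) : B y = 0 := by
  rcases (fixSub B y).dense_or_cyclic with hd | ⟨a, ha⟩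
  · have hall : ∀ s : ℝ, exp (s • B) y = y := by
      intro s
      have huniv : (fixSub B y : Set ℝ) = Set.univ := by
        have := hd.closure_eq
        rwa [(isClosed_fixSub B y).closure_eq] at this
      have hs : s ∈ (fixSub B y : Set ℝ) := huniv ▸ Set.mem_univ s
      exact hs
    have h1 : HasDerivAt (fun s : ℝ => exp (s • B) y) (exp ((0:ℝ) • B) (B y)) 0 :=
      hasDerivAt_flow B y 0
    have h2 : HasDerivAt (fun s : ℝ => exp (s • B) y) 0 0 := by
      have hfun : (fun s : ℝ => exp (s • B) y) = fun _ => y := funext hall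
      rw [hfun]; exact hasDerivAt_const _ _
    have := h1.unique h2
    simpa [exp_zero] using this
  · exfalso
    have hcnt : (fixSub B y : Set ℝ).Countable := by
      rw [ha]
      have hsub : (AddSubgroup.closure ({a} : Set ℝ) : Set ℝ) ⊆
          Set.range (fun n : ℤ => n • a) := by
        intro x hx
        rcases AddSubgroup.mem_closure_singleton.mp hx with ⟨n, hn⟩
        exact ⟨n, hn⟩
      exact (Set.countable_range _).mono hsub
    have hrange : (Set.range τ).Countable :=
      hcnt.mono (by rintro _ ⟨t, rfl⟩; exact hfix t)
    have huc : (Set.univ : Set ℝ).Countable := by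
      have := hrange.preimage hτ.injective
      rwa [Set.preimage_range] at this
    exact Cardinal.not_countable_real huc

/-- The tangent lemma: a `C¹` curve running inside an orbit with (strictly monotone)
reparametrization has velocity a nonnegative multiple of the orbit vector field. -/
lemma tangent_lemma (B : Y →L[ℝ] Y) (y : Y) (hy : B y ≠ 0)
    (γ : ℝ → Y) (v : Y) (hγ : HasDerivAt γ v 0) (hγ0 : γ 0 = y)
    (τ : ℝ → ℝ) (hτ : StrictMono τ) (heq : ∀ t, γ t = exp (τ t • B) y) :
    ∃ c : ℝ, 0 ≤ c ∧ v = c • B y := by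
  classical
  set δ : ℝ → Y := fun s => exp (s • B) y with hδdef
  have hδ0 : δ 0 = y := by simp [hδdef, exp_zero]
  have hshift : ∀ s g : ℝ, δ g = y → δ (s + g) = δ s := by
    intro s g hg
    show exp ((s + g) • B) y = exp (s • B) y
    rw [exp_smul_add, ContinuousLinearMap.mul_apply,
      show (exp (g • B)) y = y from hg]
  set L := sInf (τ '' Set.Ioi (0:ℝ)) with hLdef
  set R := sSup (τ '' Set.Iio (0:ℝ)) with hRdef
  have htL : Tendsto τ (𝓝[>] (0:ℝ)) (𝓝 L) := hτ.monotone.tendsto_nhdsGT 0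
  have htR : Tendsto τ (𝓝[<] (0:ℝ)) (𝓝 R) := hτ.monotone.tendsto_nhdsLT 0
  have hγcont := hγ.continuousAt
  have hδcont : Continuous δ := continuous_flow B y
  have hLfix : δ L = y := by
    have h1 : Tendsto (fun t => δ (τ t)) (𝓝[>] (0:ℝ)) (𝓝 (δ L)) := (hδcont.tendsto L).comp htL
    have h2 : Tendsto (fun t => δ (τ t)) (𝓝[>] (0:ℝ)) (𝓝 y) := by
      have h3 : Tendsto γ (𝓝[>] (0:ℝ)) (𝓝 y) := by
        have := hγcont.continuousWithinAt (s := Set.Ioi (0:ℝ))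
        rwa [ContinuousWithinAt, hγ0] at this
      exact h3.congr fun t => heq t
    exact tendsto_nhds_unique h1 h2
  have hRfix : δ R = y := by
    have h1 : Tendsto (fun t => δ (τ t)) (𝓝[<] (0:ℝ)) (𝓝 (δ R)) := (hδcont.tendsto R).comp htR
    have h2 : Tendsto (fun t => δ (τ t)) (𝓝[<] (0:ℝ)) (𝓝 y) := by
      have h3 : Tendsto γ (𝓝[<] (0:ℝ)) (𝓝 y) := by
        have := hγcont.continuousWithinAt (s := Set.Iio (0:ℝ))
        rwa [ContinuousWithinAt, hγ0] at this
      exact h3.congr fun t => heq t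
    exact tendsto_nhds_unique h1 h2
  set u : ℝ → ℝ := fun t => if 0 < t then τ t - L else if t < 0 then τ t - R else 0 with hudef
  have hu0 : u 0 = 0 := by simp [hudef]
  have hupos : ∀ t, 0 < t → 0 ≤ u t := by
    intro t ht
    have hle : L ≤ τ t :=
      csInf_le ⟨τ 0, by rintro z ⟨s, hs, rfl⟩; exact (hτ (Set.mem_Ioi.mp hs)).le⟩
        ⟨t, ht, rfl⟩
    simp [hudef, ht, sub_nonneg.mpr hle]
  have hueq : ∀ t, γ t = δ (u t) := by
    intro t
    rcases lt_trichotomy 0 t with ht | ht | ht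
    · have h5 := hshift (τ t - L) L hLfix
      rw [sub_add_cancel] at h5
      rw [hudef]; simp only [if_pos ht]
      rw [heq t]; exact h5
    · rw [← ht, hγ0, hu0, hδ0]
    · have h5 := hshift (τ t - R) R hRfix
      rw [sub_add_cancel] at h5
      rw [hudef]; simp only [if_neg (not_lt.mpr ht.le), if_pos ht]
      rw [heq t]; exact h5
  have hutend : Tendsto u (𝓝 (0:ℝ)) (𝓝 0) := by
    have h1 : Tendsto u (𝓝[>] (0:ℝ)) (𝓝 0) := by
      have h2 : Tendsto (fun t => τ t - L) (𝓝[>] (0:ℝ)) (𝓝 (L - L)) := htL.sub_const L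
      rw [sub_self] at h2
      refine h2.congr' ?_
      filter_upwards [self_mem_nhdsWithin] with t ht
      simp [hudef, Set.mem_Ioi.mp ht]
    have h2 : Tendsto u (𝓝[<] (0:ℝ)) (𝓝 0) := by
      have h3 : Tendsto (fun t => τ t - R) (𝓝[<] (0:ℝ)) (𝓝 (R - R)) := htR.sub_const R
      rw [sub_self] at h3
      refine h3.congr' ?_
      filter_upwards [self_mem_nhdsWithin] with t ht
      have ht' := Set.mem_Iio.mp ht
      simp [hudef, not_lt.mpr ht'.le, ht']
    have h3 : Tendsto u (pure (0:ℝ)) (𝓝 0) := by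
      have h4 := tendsto_pure_pure u 0
      rw [hu0] at h4
      exact h4.mono_right (pure_le_nhds _)
    have hsplit : (𝓝 (0:ℝ)) = (𝓝[<] (0:ℝ) ⊔ 𝓝[>] (0:ℝ)) ⊔ pure 0 := by
      rw [nhdsLT_sup_nhdsGT, nhdsNE_sup_pure]
    nth_rewrite 1 [hsplit]
    exact tendsto_sup.mpr ⟨tendsto_sup.mpr ⟨h2, h1⟩, h3⟩
  obtain ⟨g0, -, hg0⟩ := exists_dual_vector ℝ (B y) (norm_ne_zero_iff.mpr hy)
  set ℓ : Y →L[ℝ] ℝ := ‖B y‖⁻¹ • g0 with hℓdef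
  have hℓBy : ℓ (B y) = 1 := by
    rw [hℓdef]
    simp only [ContinuousLinearMap.smul_apply, hg0, smul_eq_mul, RCLike.ofReal_real_eq_id, id_eq]
    exact inv_mul_cancel₀ (norm_ne_zero_iff.mpr hy)
  set φ : ℝ → ℝ := fun s => ℓ (δ s) with hφdef
  have hφ : HasStrictDerivAt φ 1 0 := by
    have h1 : HasStrictDerivAt δ (B y) 0 := by
      simpa [exp_zero] using hasStrictDerivAt_flow B y 0
    have h2 := ℓ.hasStrictFDerivAt.comp_hasStrictDerivAt 0 h1
    exact h2.congr_deriv (by simpa using hℓBy)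
  have e := hφ.hasStrictFDerivAt_equiv one_ne_zero
  set q : ℝ → ℝ := e.localInverse _ _ _ with hqdef
  have hqleft : ∀ᶠ s in 𝓝 (0:ℝ), q (φ s) = s := e.eventually_left_inverse
  have hφ0 : φ 0 = ℓ y := by rw [hφdef]; simp only [hδ0]
  have hqderiv : HasStrictDerivAt q 1 (ℓ y) := by
    have h6 := e.to_localInverse
    rw [← hqdef] at h6
    have h7 := h6.hasStrictDerivAt
    simpa [hφ0] using h7
  have hueq' : ∀ᶠ t in 𝓝 (0:ℝ), q (ℓ (γ t)) = u t := by
    filter_upwards [hutend.eventually hqleft] with t ht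
    have h8 : ℓ (γ t) = φ (u t) := by rw [hφdef]; simp only []; rw [hueq t]
    rw [h8, ht]
  have hℓγ : HasDerivAt (fun t => ℓ (γ t)) (ℓ v) 0 := ℓ.hasFDerivAt.comp_hasDerivAt 0 hγ
  have hqat : HasDerivAt q 1 ((fun t => ℓ (γ t)) 0) := by
    simp only [hγ0]
    exact hqderiv.hasDerivAt
  have hw : HasDerivAt (fun t => q (ℓ (γ t))) (1 * ℓ v) 0 := hqat.comp 0 hℓγ
  have hu' : HasDerivAt u (ℓ v) 0 := by
    have h9 := hw.congr_of_eventuallyEq (hueq'.mono fun t ht => ht.symm)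
    simpa using h9
  set c := ℓ v with hcdef
  have hcnonneg : 0 ≤ c := by
    have hslope := hasDerivAt_iff_tendsto_slope.mp hu'
    have h4 : Tendsto (slope u 0) (𝓝[>] (0:ℝ)) (𝓝 c) :=
      hslope.mono_left (nhdsWithin_mono 0 fun t ht => (Set.mem_Ioi.mp ht).ne')
    refine ge_of_tendsto h4 ?_
    filter_upwards [self_mem_nhdsWithin] with t ht
    have ht' := Set.mem_Ioi.mp ht
    rw [slope_def_field, hu0, sub_zero, sub_zero]
    exact div_nonneg (hupos t ht') ht'.le
  have hδat : HasDerivAt δ (B y) (u 0) := by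
    rw [hu0]; simpa [exp_zero] using hasDerivAt_flow B y 0
  have hδu : HasDerivAt (fun t => δ (u t)) (c • B y) 0 := hδat.scomp 0 hu'
  have hfin : HasDerivAt γ (c • B y) 0 := by
    have hfun : (fun t => δ (u t)) = γ := funext fun t => (hueq t).symm
    rwa [hfun] at hδu
  exact ⟨c, hcnonneg, hγ.unique hfin⟩

lemma exp_comm_apply (B : Y →L[ℝ] Y) (t : ℝ) (y : Y) :
    exp (t • B) (B y) = B (exp (t • B) y) := by
  have hc : Commute (exp (t • B)) B := ((Commute.refl B).smul_left t).exp_left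
  calc exp (t • B) (B y) = (exp (t • B) * B) y := rfl
    _ = (B * exp (t • B)) y := by rw [hc.eq]
    _ = B (exp (t • B) y) := rfl

end Helpers

/-- If the linear flows `Φ` (generated by `A`) and `Ψ` (generated by
`B`) are `C¹`-orbit equivalent (i.e. `(h,τ)`-related with `h` a `C¹`-diffeomorphism),
then `A` and `α·B` are similar for some `α > 0`; conversely, if `A` and `α·B` are
similar via `H` for some `α > 0`, then `Φ` and `Ψ` are linearly flow equivalent via
`h = H` and `τ(t,x) = α·t`. -/
theorem stmt19 {X Y : Type*}
    [NormedAddCommGroup X] [NormedSpace ℝ X] [FiniteDimensional ℝ X]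
    [NormedAddCommGroup Y] [NormedSpace ℝ Y] [FiniteDimensional ℝ Y]
    (A : X →L[ℝ] X) (B : Y →L[ℝ] Y) :
    ((∃ (h : X → Y) (g : Y → X) (τ : ℝ → X → ℝ),
        ContDiff ℝ 1 h ∧ ContDiff ℝ 1 g ∧
        Function.LeftInverse g h ∧ Function.RightInverse g h ∧
        (∀ x, StrictMono fun t => τ t x) ∧
        (∀ t x, h (linFlow A t x) = linFlow B (τ t x) (h x))) →
      ∃ α : ℝ, 0 < α ∧ ∃ H : X ≃ₗ[ℝ] Y, ∀ x, H (A x) = α • B (H x)) ∧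
    (∀ (α : ℝ), 0 < α → ∀ H : X ≃ₗ[ℝ] Y, (∀ x, H (A x) = α • B (H x)) →
      ∀ (t : ℝ) (x : X), H (linFlow A t x) = linFlow B (α * t) (H x)) := by
  constructor
  · rintro ⟨h, g, τ, hch, hcg, hgh, hhg, hmono, hconj⟩
    simp only [linFlow] at hconj
    have hdh : Differentiable ℝ h := hch.differentiable one_ne_zero
    have hdg : Differentiable ℝ g := hcg.differentiable one_ne_zero
    have P1 : ∀ x : X, A x = 0 → B (h x) = 0 := by
      intro x hx
      have hfix : ∀ t : ℝ, exp (t • A) x = x := fun t => fixed_of_deriv_zero A x hx t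
      have hfix2 : ∀ t : ℝ, exp (τ t x • B) (h x) = h x := by
        intro t
        rw [← hconj t x, hfix t]
      exact deriv_zero_of_fixed B (h x) (fun t => τ t x) (hmono x) hfix2
    have P2 : ∀ x : X, B (h x) = 0 → A x = 0 := by
      intro x hx
      have hfix : ∀ t : ℝ, exp (t • A) x = x := by
        intro t
        have h1 : h (exp (t • A) x) = h x := by
          rw [hconj t x, fixed_of_deriv_zero B (h x) hx (τ t x)]
        have h2 := congrArg g h1
        rwa [hgh _, hgh _] at h2
      have h1 : HasDerivAt (fun t : ℝ => exp (t • A) x) (exp ((0:ℝ) • A) (A x)) 0 :=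
        hasDerivAt_flow A x 0
      have h2 : HasDerivAt (fun t : ℝ => exp (t • A) x) 0 0 := by
        have hfun : (fun t : ℝ => exp (t • A) x) = fun _ => x := funext hfix
        rw [hfun]; exact hasDerivAt_const _ _
      have h3 := h1.unique h2
      simpa [exp_zero] using h3
    set y₀ := h 0 with hy₀
    have hBy₀ : B y₀ = 0 := P1 0 (map_zero A)
    set Hd := fderiv ℝ h 0 with hHd
    set Gd := fderiv ℝ g y₀ with hGd
    have hgy₀ : g y₀ = 0 := hgh 0
    have hdh0 : HasFDerivAt h Hd 0 := (hdh 0).hasFDerivAt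
    have hdgy : HasFDerivAt g Gd y₀ := (hdg y₀).hasFDerivAt
    have hinv1 : ∀ z, Gd (Hd z) = z := by
      intro z
      have hc : HasFDerivAt (g ∘ h) (Gd.comp Hd) 0 := hdgy.comp 0 hdh0
      have hid : HasFDerivAt (g ∘ h) (ContinuousLinearMap.id ℝ X) 0 := by
        have hfun : (g ∘ h) = id := funext hgh
        rw [hfun]; exact hasFDerivAt_id 0
      have heq := hc.unique hid
      calc Gd (Hd z) = (Gd.comp Hd) z := rfl
        _ = z := by rw [heq]; rfl
    have hinv2 : ∀ z, Hd (Gd z) = z := by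
      intro z
      have hdh0' : HasFDerivAt h Hd (g y₀) := by rw [hgy₀]; exact hdh0
      have hc : HasFDerivAt (h ∘ g) (Hd.comp Gd) y₀ := hdh0'.comp y₀ hdgy
      have hid : HasFDerivAt (h ∘ g) (ContinuousLinearMap.id ℝ Y) y₀ := by
        have hfun : (h ∘ g) = id := funext hhg
        rw [hfun]; exact hasFDerivAt_id y₀
      have heq := hc.unique hid
      calc Hd (Gd z) = (Hd.comp Gd) z := rfl
        _ = z := by rw [heq]; rfl
    have hslopeH : ∀ v : X, Tendsto (fun ε : ℝ => ε⁻¹ • (h (ε • v) - y₀)) (𝓝[>] (0:ℝ))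
        (𝓝 (Hd v)) := by
      intro v
      have h2 : HasDerivAt (fun ε : ℝ => ε • v) v 0 := by
        simpa using (hasDerivAt_id (0:ℝ)).smul_const v
      have h3 : HasFDerivAt h Hd ((0:ℝ) • v) := by rw [zero_smul]; exact hdh0
      have h1 : HasDerivAt (fun ε : ℝ => h (ε • v)) (Hd v) 0 := h3.comp_hasDerivAt 0 h2
      have h4 := hasDerivAt_iff_tendsto_slope.mp h1
      have h5 : Tendsto (slope (fun ε : ℝ => h (ε • v)) 0) (𝓝[>] (0:ℝ)) (𝓝 (Hd v)) :=
        h4.mono_left (nhdsWithin_mono 0 fun t ht => (Set.mem_Ioi.mp ht).ne')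
      refine h5.congr fun ε => ?_
      rw [slope_def_module, sub_zero, zero_smul, hy₀]
    have hkerB : ∀ v : X, A v = 0 → B (Hd v) = 0 := by
      intro v hv
      have h1 : ∀ ε : ℝ, B (ε⁻¹ • (h (ε • v) - y₀)) = 0 := by
        intro ε
        have h2 : B (h (ε • v)) = 0 := P1 _ (by rw [map_smul, hv, smul_zero])
        rw [map_smul, map_sub, h2, hBy₀, sub_zero, smul_zero]
      have h2 : Tendsto (fun ε : ℝ => B (ε⁻¹ • (h (ε • v) - y₀))) (𝓝[>] (0:ℝ))
          (𝓝 (B (Hd v))) := (B.continuous.tendsto _).comp (hslopeH v)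
      have h3 : Tendsto (fun ε : ℝ => B (ε⁻¹ • (h (ε • v) - y₀))) (𝓝[>] (0:ℝ)) (𝓝 0) := by
        simp only [h1]; exact tendsto_const_nhds
      exact tendsto_nhds_unique h2 h3
    have hkerA : ∀ v : X, B (Hd v) = 0 → A v = 0 := by
      intro v hv
      have h1 : ∀ ε : ℝ, A (g (ε • Hd v + y₀)) = 0 := by
        intro ε
        apply P2
        rw [hhg (ε • Hd v + y₀), map_add, map_smul, hv, smul_zero, zero_add, hBy₀]
      have hlin : HasDerivAt (fun ε : ℝ => ε • Hd v + y₀) (Hd v) 0 := by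
        simpa using ((hasDerivAt_id (0:ℝ)).smul_const (Hd v)).add_const y₀
      have h3 : HasFDerivAt g Gd ((0:ℝ) • Hd v + y₀) := by
        rw [zero_smul, zero_add]; exact hdgy
      have h2 : HasDerivAt (fun ε : ℝ => g (ε • Hd v + y₀)) (Gd (Hd v)) 0 :=
        h3.comp_hasDerivAt 0 hlin
      have h4 := hasDerivAt_iff_tendsto_slope.mp h2
      have h5 : Tendsto (slope (fun ε : ℝ => g (ε • Hd v + y₀)) 0) (𝓝[>] (0:ℝ))
          (𝓝 (Gd (Hd v))) :=
        h4.mono_left (nhdsWithin_mono 0 fun t ht => (Set.mem_Ioi.mp ht).ne')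
      have h6 : Tendsto (fun ε : ℝ => A (slope (fun ε : ℝ => g (ε • Hd v + y₀)) 0 ε))
          (𝓝[>] (0:ℝ)) (𝓝 (A (Gd (Hd v)))) := (A.continuous.tendsto _).comp h5
      have h7 : ∀ ε : ℝ, A (slope (fun ε : ℝ => g (ε • Hd v + y₀)) 0 ε) = 0 := by
        intro ε
        rw [slope_def_module, sub_zero, zero_smul, zero_add, hgy₀, sub_zero, map_smul,
          h1 ε, smul_zero]
      have h8 : A (Gd (Hd v)) = 0 := by
        refine tendsto_nhds_unique h6 ?_
        simp only [h7]; exact tendsto_const_nhds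
      rwa [hinv1 v] at h8
    by_cases hA : ∀ v : X, A v = 0
    · have hB : ∀ z : Y, B z = 0 := by
        intro z
        have h1 := hkerB (Gd z) (hA _)
        rwa [hinv2 z] at h1
      refine ⟨1, one_pos,
        LinearEquiv.ofLinear (Hd : X →ₗ[ℝ] Y) (Gd : Y →ₗ[ℝ] X)
          (by ext z; exact hinv2 z) (by ext z; exact hinv1 z), fun x => ?_⟩
      simp [hA x, hB]
    · push_neg at hA
      obtain ⟨v₀, hv₀⟩ := hA
      have P4 : ∀ v : X, A v ≠ 0 → ∃ c : ℝ, 0 < c ∧ Hd (A v) = c • B (Hd v) := by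
        intro v hv
        have hBHv : B (Hd v) ≠ 0 := fun hc => hv (hkerA v hc)
        have key : ∀ ε : ℝ, ∃ c : ℝ, 0 ≤ c ∧ (0 < ε →
            fderiv ℝ h (ε • v) (A v) = c • (ε⁻¹ • B (h (ε • v)))) := by
          intro ε
          by_cases hε : 0 < ε
          · have hx : A (ε • v) ≠ 0 := by
              rw [map_smul]
              exact smul_ne_zero hε.ne' hv
            have hBh : B (h (ε • v)) ≠ 0 := fun hc => hx (P2 _ hc)
            have hγin : HasDerivAt (fun t : ℝ => exp (t • A) (ε • v)) (A (ε • v)) 0 := by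
              simpa [exp_zero] using hasDerivAt_flow A (ε • v) 0
            have h3 : HasFDerivAt h (fderiv ℝ h (ε • v)) (exp ((0:ℝ) • A) (ε • v)) := by
              rw [zero_smul, exp_zero, ContinuousLinearMap.one_apply]
              exact (hdh _).hasFDerivAt
            have hγ : HasDerivAt (fun t : ℝ => h (exp (t • A) (ε • v)))
                (fderiv ℝ h (ε • v) (A (ε • v))) 0 := h3.comp_hasDerivAt 0 hγin
            have hγ0 : h (exp ((0:ℝ) • A) (ε • v)) = h (ε • v) := by
              rw [zero_smul, exp_zero, ContinuousLinearMap.one_apply]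
            obtain ⟨c, hc0, hceq⟩ := tangent_lemma B (h (ε • v)) hBh _ _ hγ hγ0
              (fun t => τ t (ε • v)) (hmono (ε • v)) (fun t => hconj t (ε • v))
            refine ⟨c, hc0, fun _ => ?_⟩
            have h5 : fderiv ℝ h (ε • v) (A (ε • v)) = ε • fderiv ℝ h (ε • v) (A v) := by
              rw [map_smul, map_smul]
            rw [h5] at hceq
            have h6 := congrArg (fun z => ε⁻¹ • z) hceq
            simp only [smul_smul, inv_mul_cancel₀ hε.ne', one_smul] at h6
            rw [h6, mul_smul]
            exact smul_comm _ _ _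
          · exact ⟨0, le_refl 0, fun hc => absurd hc hε⟩
        choose cf hcf0 hcfeq using key
        obtain ⟨g1, -, hg1⟩ := exists_dual_vector ℝ (B (Hd v)) (norm_ne_zero_iff.mpr hBHv)
        set ℓ : Y →L[ℝ] ℝ := ‖B (Hd v)‖⁻¹ • g1 with hℓdef
        have hℓ1 : ℓ (B (Hd v)) = 1 := by
          rw [hℓdef]
          simp only [ContinuousLinearMap.smul_apply, hg1, smul_eq_mul,
            RCLike.ofReal_real_eq_id, id_eq]
          exact inv_mul_cancel₀ (norm_ne_zero_iff.mpr hBHv)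
        have hBsl : Tendsto (fun ε : ℝ => ε⁻¹ • B (h (ε • v))) (𝓝[>] (0:ℝ))
            (𝓝 (B (Hd v))) := by
          have h1 := (B.continuous.tendsto _).comp (hslopeH v)
          refine h1.congr fun ε => ?_
          simp only [Function.comp_apply, map_smul, map_sub, hBy₀, sub_zero]
        have hfd : Tendsto (fun ε : ℝ => fderiv ℝ h (ε • v) (A v)) (𝓝[>] (0:ℝ))
            (𝓝 (Hd (A v))) := by
          have hcont : Continuous fun x : X => fderiv ℝ h x (A v) :=
            (hch.continuous_fderiv one_ne_zero).clm_apply continuous_const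
          have hsm : Tendsto (fun ε : ℝ => ε • v) (𝓝[>] (0:ℝ)) (𝓝 (0:X)) := by
            have h2 : Tendsto (fun ε : ℝ => ε • v) (𝓝 (0:ℝ)) (𝓝 ((0:ℝ) • v)) :=
              (continuous_id.smul continuous_const).tendsto 0
            rw [zero_smul] at h2
            exact h2.mono_left nhdsWithin_le_nhds
          have h3 := (hcont.tendsto (0:X)).comp hsm
          rwa [← hHd] at h3
        have hcft : Tendsto cf (𝓝[>] (0:ℝ)) (𝓝 (ℓ (Hd (A v)))) := by
          have hnum : Tendsto (fun ε : ℝ => ℓ (fderiv ℝ h (ε • v) (A v))) (𝓝[>] (0:ℝ))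
              (𝓝 (ℓ (Hd (A v)))) := (ℓ.continuous.tendsto _).comp hfd
          have hden : Tendsto (fun ε : ℝ => ℓ (ε⁻¹ • B (h (ε • v)))) (𝓝[>] (0:ℝ)) (𝓝 1) := by
            have h4 := (ℓ.continuous.tendsto _).comp hBsl
            rwa [hℓ1] at h4
          have hdiv := hnum.div hden one_ne_zero
          simp only [div_one] at hdiv
          refine hdiv.congr' ?_
          filter_upwards [self_mem_nhdsWithin, hden.eventually_ne one_ne_zero] with ε hε hne
          have h5 := hcfeq ε (Set.mem_Ioi.mp hε)
          have h6 : ℓ ((fderiv ℝ h (ε • v)) (A v)) = cf ε * ℓ (ε⁻¹ • B (h (ε • v))) := by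
            rw [h5, map_smul, smul_eq_mul]
          show ℓ ((fderiv ℝ h (ε • v)) (A v)) / ℓ (ε⁻¹ • B (h (ε • v))) = cf ε
          rw [div_eq_iff hne]
          exact h6
        have hεnonneg : 0 ≤ ℓ (Hd (A v)) := by
          refine ge_of_tendsto hcft ?_
          filter_upwards [] with ε
          exact hcf0 ε
        have hmain : Hd (A v) = ℓ (Hd (A v)) • B (Hd v) := by
          have hrhs : Tendsto (fun ε : ℝ => cf ε • (ε⁻¹ • B (h (ε • v)))) (𝓝[>] (0:ℝ))
              (𝓝 (ℓ (Hd (A v)) • B (Hd v))) := hcft.smul hBsl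
          have hlhs : Tendsto (fun ε : ℝ => cf ε • (ε⁻¹ • B (h (ε • v)))) (𝓝[>] (0:ℝ))
              (𝓝 (Hd (A v))) := by
            refine hfd.congr' ?_
            filter_upwards [self_mem_nhdsWithin] with ε hε
            exact hcfeq ε (Set.mem_Ioi.mp hε)
          exact tendsto_nhds_unique hlhs hrhs
        have hne : ℓ (Hd (A v)) ≠ 0 := by
          intro hc
          rw [hc, zero_smul] at hmain
          have h7 : Gd (Hd (A v)) = A v := hinv1 (A v)
          rw [hmain, map_zero] at h7
          exact hv h7.symm
        exact ⟨ℓ (Hd (A v)), lt_of_le_of_ne hεnonneg (Ne.symm hne), hmain⟩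
      obtain ⟨α, hα, hαeq⟩ := P4 v₀ hv₀
      have hBHv₀ : B (Hd v₀) ≠ 0 := fun hc => hv₀ (hkerA v₀ hc)
      refine ⟨α, hα,
        LinearEquiv.ofLinear (Hd : X →ₗ[ℝ] Y) (Gd : Y →ₗ[ℝ] X)
          (by ext z; exact hinv2 z) (by ext z; exact hinv1 z), fun x => ?_⟩
      show Hd (A x) = α • B (Hd x)
      by_cases hx : A x = 0
      · rw [hx, map_zero, hkerB x hx, smul_zero]
      obtain ⟨c, hc, hceq⟩ := P4 x hx
      by_cases hdep : ∃ β : ℝ, B (Hd x) = β • B (Hd v₀)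
      · obtain ⟨β, hβ⟩ := hdep
        have hβ0 : β ≠ 0 := by
          rintro rfl
          rw [zero_smul] at hβ
          exact hx (hkerA x hβ)
        have h1 : B (Hd (x - β • v₀)) = 0 := by
          rw [map_sub, map_smul, map_sub, map_smul, hβ, sub_self]
        have h2 : A (x - β • v₀) = 0 := hkerA _ h1
        have h3 : A x = β • A v₀ := by
          rw [map_sub, map_smul, sub_eq_zero] at h2
          exact h2
        rw [h3, map_smul, hαeq, hβ, smul_comm]
      · push_neg at hdep
        have hxv₀ : A (x + v₀) ≠ 0 := by
          intro hc2
          have h1 := hkerB _ hc2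
          rw [map_add, map_add] at h1
          refine hdep (-1) ?_
          rw [neg_one_smul]
          exact eq_neg_of_add_eq_zero_left h1
        obtain ⟨c', hc', hc'eq⟩ := P4 _ hxv₀
        have h4 : c • B (Hd x) + α • B (Hd v₀) = c' • B (Hd x) + c' • B (Hd v₀) := by
          have h5 := hc'eq
          simp only [map_add] at h5
          rw [hceq, hαeq] at h5
          rw [h5, smul_add]
        by_cases hcc : c = c'
        · subst hcc
          have h6 : α • B (Hd v₀) = c • B (Hd v₀) := by
            have := add_left_cancel h4
            exact this
          have h7 : α = c := by
            by_contra h8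
            apply hBHv₀
            have h9 : (α - c) • B (Hd v₀) = 0 := by
              rw [sub_smul, h6, sub_self]
            exact (smul_eq_zero.mp h9).resolve_left (sub_ne_zero.mpr h8)
          rw [hceq, h7]
        · exfalso
          apply hdep ((c' - α) / (c - c'))
          have h5 : (c - c') • B (Hd x) = (c' - α) • B (Hd v₀) := by
            rw [sub_smul, sub_smul]
            have h6 : c • B (Hd x) - c' • B (Hd x) = c' • B (Hd v₀) - α • B (Hd v₀) := by
              rw [sub_eq_sub_iff_add_eq_add, h4, add_comm]
            exact h6
          have h8 : B (Hd x) = (c - c')⁻¹ • ((c' - α) • B (Hd v₀)) := by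
            rw [← h5, smul_smul, inv_mul_cancel₀ (sub_ne_zero.mpr hcc), one_smul]
          rw [h8, smul_smul, div_eq_inv_mul]
  · intro α hα H hsim t x
    simp only [linFlow]
    set Hc : X →L[ℝ] Y := LinearMap.toContinuousLinearMap (H : X →ₗ[ℝ] Y) with hHc
    have hHcap : ∀ z, Hc z = H z := fun z => rfl
    have hkey : ∀ s : ℝ, exp ((-(α * s)) • B) (Hc (exp (s • A) x)) = Hc x := by
      have hdiff : ∀ s : ℝ, HasDerivAt
          (fun s : ℝ => exp ((-(α * s)) • B) (Hc (exp (s • A) x))) 0 s := by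
        intro s
        have h1 : HasDerivAt (fun r : ℝ => exp (r • B))
            (exp ((-(α * s)) • B) * B) (-(α * s)) := hasDerivAt_exp_smul_const B _
        have h2 : HasDerivAt (fun s : ℝ => -(α * s)) (-α) s := by
          exact ((hasDerivAt_id s).const_mul α).neg.congr_deriv (by simp)
        have hM : HasDerivAt (fun s : ℝ => exp ((-(α * s)) • B))
            ((-α) • (exp ((-(α * s)) • B) * B)) s := by have := h1.scomp s h2; exact this
        have hN : HasDerivAt (fun s : ℝ => Hc (exp (s • A) x))
            (Hc (exp (s • A) (A x))) s :=
          Hc.hasFDerivAt.comp_hasDerivAt s (hasDerivAt_flow A x s)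
        have h3 := hM.clm_apply hN
        have h4 : ((-α) • (exp ((-(α * s)) • B) * B)) (Hc (exp (s • A) x)) +
            exp ((-(α * s)) • B) (Hc (exp (s • A) (A x))) = 0 := by
          have h5 : Hc (exp (s • A) (A x)) = α • B (Hc (exp (s • A) x)) := by
            rw [exp_comm_apply, hHcap, hHcap, hsim]
          rw [h5]
          simp only [ContinuousLinearMap.smul_apply, ContinuousLinearMap.mul_apply,
            map_smul]
          rw [neg_smul, neg_add_cancel]
        rwa [h4] at h3
      intro s
      have h6 := is_const_of_deriv_eq_zero (fun r => (hdiff r).differentiableAt)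
        (fun r => (hdiff r).deriv) s 0
      simpa [exp_zero] using h6
    have h2 := congrArg (⇑(exp ((α * t) • B))) (hkey t)
    rw [← ContinuousLinearMap.mul_apply, ← exp_smul_add] at h2
    have h3 : α * t + -(α * t) = 0 := add_neg_cancel _
    rw [h3, zero_smul, exp_zero, ContinuousLinearMap.one_apply] at h2
    rw [← hHcap, ← hHcap, h2]
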